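/- arXiv:2410.12755 — 2 statements merged into one kernel-verified Lean document; each statement's English description precedes it below -/
import Mathlib

section
/- Let n = (3 + ε)t + 1 (as a real or rational quantity with ε > 0 fixed and t ≥ 1 a natural number scaled so that εt is an integer). If each candidate digest must appear in at least n − 3t = εt + 1 of the n − t = (2 + ε)t + 1 received messages, then the number of distinct candidates is at most ⌈3/ε⌉. -/
/-- Let `n = (3 + ε)t + 1` with `ε > 0`, `t ≥ 1` and `e = εt` a
natural number. If each candidate digest appears in at least
`n - 3t = εt + 1` of the `n - t = (2 + ε)t + 1 = 2t + e + 1` received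
messages, i.e. `k * (e + 1) ≤ 2t + e + 1` for `k` distinct candidates, then
`k ≤ ⌈3/ε⌉`. -/
theorem stmt_5 (ε : ℝ) (hε : 0 < ε) (t e k : ℕ) (ht : 1 ≤ t)
    (he : (e : ℝ) = ε * t)
    (h : k * (e + 1) ≤ 2 * t + e + 1) :
    k ≤ ⌈(3 : ℝ) / ε⌉₊ := by
  have hR : (k : ℝ) * (e + 1) ≤ 2 * t + e + 1 := by exact_mod_cast h
  have hk : (k : ℝ) < 3 / ε + 1 := by
    rw [div_add' _ _ _ hε.ne', lt_div_iff₀ hε]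
    calc (k : ℝ) * ε = (k * (e + 1)) * ε / (e + 1) := by
          field_simp
        _ ≤ (2 * t + e + 1) * ε / (e + 1) := by
          apply div_le_div_of_nonneg_right _ (by positivity)
          exact mul_le_mul_of_nonneg_right hR hε.le
        _ < 3 + 1 * ε := by
          rw [div_lt_iff₀ (by positivity)]
          have h1 : (1 : ℝ) ≤ t := by exact_mod_cast ht
          nlinarith [he, mul_pos hε (lt_of_lt_of_le one_pos h1)]
  have := Nat.le_ceil ((3 : ℝ) / ε)
  have : (k : ℝ) < ⌈(3 : ℝ) / ε⌉₊ + 1 := by linarith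
  have : k < ⌈(3 : ℝ) / ε⌉₊ + 1 := by exact_mod_cast this
  omega
end

section
/- Let ε > 0, t ≥ 1 with εt a positive integer, and n = (3 + ε)t + 1. If each of at most n correct processes suggests at most ⌈3/ε⌉ digests, and each committed digest is suggested by at least εt + 1 correct processes, then the number of distinct committed digests is at most C = ⌈12/ε²⌉ + ⌈7/ε⌉. -/
/-! Writing `a = 3/ε`, the hypothesis `e = εt` gives `3t = a e`, so the number of processes
`3t + e + 1` is at most `(a + 1)(e + 1)`. Since `⌈3/ε⌉ < a + 1`, dividing the double count by
`e + 1` gives `k < (a + 1)² = 9/ε² + 6/ε + 1`, which is below `12/ε² + 7/ε + 1`. -/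

theorem lt_add_one_sq_of_mul_le {a c e m k : ℝ} (ha : 0 ≤ a) (he : 0 ≤ e) (hc₀ : 0 ≤ c)
    (hc : c < a + 1) (hm : m ≤ a * e) (h : k * (e + 1) ≤ (m + e + 1) * c) :
    k < (a + 1) ^ 2 := by
  have he₁ : 0 < e + 1 := by linarith
  have hn : m + e + 1 ≤ (a + 1) * (e + 1) := by nlinarith
  have : k * (e + 1) < (a + 1) ^ 2 * (e + 1) :=
    calc k * (e + 1) ≤ (m + e + 1) * c := h
      _ ≤ (a + 1) * (e + 1) * c := mul_le_mul_of_nonneg_right hn hc₀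
      _ < (a + 1) * (e + 1) * (a + 1) := mul_lt_mul_of_pos_left hc (by positivity)
      _ = (a + 1) ^ 2 * (e + 1) := by ring
  exact lt_of_mul_lt_mul_right this he₁.le

theorem Nat.le_ceil_add_ceil_of_lt {x y : ℝ} {k : ℕ} (h : (k : ℝ) < x + y + 1) :
    k ≤ ⌈x⌉₊ + ⌈y⌉₊ := by
  have : (k : ℝ) < ⌈x⌉₊ + ⌈y⌉₊ + 1 := by
    linarith [Nat.le_ceil x, Nat.le_ceil y]
  exact Nat.lt_add_one_iff.mp (by exact_mod_cast this)

theorem stmt_6_general (ε : ℝ) (hε : 0 < ε) (t e k : ℕ)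
    (he : (e : ℝ) = ε * t)
    (h : k * (e + 1) ≤ (3 * t + e + 1) * ⌈(3 : ℝ) / ε⌉₊) :
    k ≤ ⌈(12 : ℝ) / ε ^ 2⌉₊ + ⌈(7 : ℝ) / ε⌉₊ := by
  have ha : (0 : ℝ) ≤ 3 / ε := by positivity
  have hm : 3 / ε * e = 3 * (t : ℝ) := by
    rw [he]; field_simp
  have hk : (k : ℝ) < (3 / ε + 1) ^ 2 :=
    lt_add_one_sq_of_mul_le ha e.cast_nonneg (Nat.cast_nonneg _) (Nat.ceil_lt_add_one ha) hm.ge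
      (by exact_mod_cast h)
  have hsq : (3 / ε + 1) ^ 2 ≤ 12 / ε ^ 2 + 7 / ε + 1 := by
    rw [show (3 / ε + 1) ^ 2 = 9 / ε ^ 2 + 6 / ε + 1 by ring]
    gcongr <;> norm_num
  exact Nat.le_ceil_add_ceil_of_lt (hk.trans_le hsq)

/-- Let `n = (3 + ε)t + 1 = 3t + e + 1` with `ε > 0`, `t ≥ 1` and
`e = εt` a positive integer. Each of the at most `n` correct processes
suggests at most `⌈3/ε⌉` digests, and each committed digest is suggested by at
least `εt + 1 = e + 1` correct processes; hence if `k` distinct digests are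
committed, `k * (e + 1) ≤ (3t + e + 1) * ⌈3/ε⌉` forces
`k ≤ C = ⌈12/ε²⌉ + ⌈7/ε⌉`. -/
theorem stmt_6 (ε : ℝ) (hε : 0 < ε) (t e k : ℕ) (ht : 1 ≤ t) (hepos : 1 ≤ e)
    (he : (e : ℝ) = ε * t)
    (h : k * (e + 1) ≤ (3 * t + e + 1) * ⌈(3 : ℝ) / ε⌉₊) :
    k ≤ ⌈(12 : ℝ) / ε ^ 2⌉₊ + ⌈(7 : ℝ) / ε⌉₊ :=
  stmt_6_general ε hε t e k he h
end
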